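/- There exists a Böhm tree it^∞ (namely λf^{p⊃p}.N where N is the unique coterm satisfying N = f⟨N⟩) such that ⊢ it^∞ : (p⊃p)⊃p holds in the coinductive typing system λ̄^co, even though the type (p⊃p)⊃p has no finite inhabitant. -/

import Mathlib

/-!  Formalization of proof search in the sequent calculus LJT (λ̄) with
coinductive Böhm trees/forests (as M-types), following Espírito Santo,
Matthes, Pinto, "A coinductive approach to proof search". -/

namespace LambdaBar

/-- Implicational formulas over atoms (natural numbers). -/
inductive Ty : Type
  | at : ℕ → Ty
  | imp : Ty → Ty → Ty
  deriving DecidableEq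

/-- Contexts: finite lists of declarations `x : A`. -/
abbrev Ctx := List (ℕ × Ty)

/-- A context declares no variable twice. -/
def IsCtx (Γ : Ctx) : Prop := (Γ.map Prod.fst).Nodup

/-- A (possibly redundant) list of declarations is functional, i.e. its
set of declarations is a context. -/
def FunCtx (Γ : Ctx) : Prop := ∀ x A A', (x, A) ∈ Γ → (x, A') ∈ Γ → A = A'

/-- `Ty.mkImp [B₁,…,Bₖ] p` is `B₁ ⊃ … ⊃ Bₖ ⊃ p`. -/
def Ty.mkImp : List Ty → ℕ → Ty
  | [], p => .at p
  | A :: As, p => .imp A (Ty.mkImp As p)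

/-- The vector of premises of a formula: `(A⃗ ⊃ p).args = A⃗`. -/
def Ty.args : Ty → List Ty
  | .at _ => []
  | .imp A B => A :: B.args

/-- The target atom of a formula: `(A⃗ ⊃ p).tgt = p`. -/
def Ty.tgt : Ty → ℕ
  | .at p => p
  | .imp _ B => B.tgt

/-- The set of types declared in a context: `|Γ|`. -/
def tyset (Γ : Ctx) : Finset Ty := (Γ.map Prod.snd).toFinset

/-- `Γ ≤ Γ'`: inclusion of contexts declaring the same set of types. -/
def CtxLe (Γ Γ' : Ctx) : Prop := Γ ⊆ Γ' ∧ tyset Γ = tyset Γ'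

/-! ### Finite λ̄-terms -/

inductive Tm : Type
  | lam : ℕ → Ty → Tm → Tm
  | app : ℕ → List Tm → Tm

/-- Inductive typing of finite λ̄-terms (cut-free system λ̄): rules
`RIntro` and `LVecIntro`. -/
inductive TypedTm : Ctx → Tm → Ty → Prop
  | rIntro {Γ : Ctx} {x : ℕ} {A B : Ty} {t : Tm} :
      TypedTm ((x, A) :: Γ) t B → TypedTm Γ (.lam x A t) (.imp A B)
  | lVecIntro {Γ : Ctx} {x : ℕ} {p : ℕ} {Bs : List Ty} {ts : List Tm} :
      (x, Ty.mkImp Bs p) ∈ Γ → ts.length = Bs.length →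
      (∀ (i : ℕ) t B, ts[i]? = some t → Bs[i]? = some B → TypedTm Γ t B) →
      TypedTm Γ (.app x ts) (.at p)

/-- Renaming `[x/y]t` on finite terms (replacing free occurrences of `y` by
`x`, respecting shadowing). -/
def Tm.rename (x y : ℕ) : Tm → Tm
  | .lam z A t => .lam z A (if z = y then t else t.rename x y)
  | .app z ts => .app (if z = y then x else z) (ts.attach.map fun u => u.1.rename x y)
decreasing_by
  all_goals simp_wf
  all_goals try omega
  all_goals (have := List.sizeOf_lt_of_mem u.2; omega)

/-! ### Böhm trees (the coinductive terms of λ̄^co), as an M-type -/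

/-- Polynomial functor for Böhm trees: a node is either a λ-abstraction
(one child) or an application `x⟨N₁,…,Nₖ⟩` (`k` children). -/
def BTP : PFunctor.{0} :=
  ⟨Sum (ℕ × Ty) (ℕ × ℕ), fun a =>
    match a with
    | .inl _ => PUnit
    | .inr (_, k) => Fin k⟩

/-- Böhm trees, the (co)terms of system λ̄^co. -/
abbrev BTree : Type := BTP.M

def BTree.lam (x : ℕ) (A : Ty) (N : BTree) : BTree :=
  PFunctor.M.mk ⟨.inl (x, A), fun _ => N⟩

def BTree.app (x : ℕ) (Ns : List BTree) : BTree :=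
  PFunctor.M.mk ⟨.inr (x, Ns.length), fun i => Ns.get i⟩

/-- Embedding of finite λ̄-terms into Böhm trees. -/
def Tm.toBTree : Tm → BTree
  | .lam x A t => BTree.lam x A t.toBTree
  | .app x ts => BTree.app x (ts.attach.map fun u => u.1.toBTree)
decreasing_by
  all_goals simp_wf
  all_goals try omega
  all_goals (have := List.sizeOf_lt_of_mem u.2; omega)

/-- One step of the coinductive typing of Böhm trees: the rules `RIntro`
and `LVecIntro`, read backwards. -/
def TTStep (R : Ctx → BTree → Ty → Prop) (Γ : Ctx) (N : BTree) (A : Ty) : Prop :=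
  match N.dest with
  | ⟨.inl (x, B), f⟩ => ∃ C, A = .imp B C ∧ R ((x, B) :: Γ) (f PUnit.unit) C
  | ⟨.inr (x, k), f⟩ => ∃ p Bs, A = .at p ∧ (x, Ty.mkImp Bs p) ∈ Γ ∧
      Bs.length = k ∧ ∀ (i : Fin k) (B : Ty), Bs[i.val]? = some B → R Γ (f i) B

/-- Coinductive typing of Böhm trees (system λ̄^co): the greatest fixed point
of `TTStep`, i.e. the union of all relations closed backward w.r.t. the rules. -/
def CoTypedT (Γ : Ctx) (N : BTree) (A : Ty) : Prop :=
  ∃ R : Ctx → BTree → Ty → Prop,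
    (∀ Γ' N' A', R Γ' N' A' → TTStep R Γ' N' A') ∧ R Γ N A

/-! ### Böhm forests (the coinductive terms of λ̄^co_Σ), as an M-type -/

/-- Polynomial functor for Böhm forests: a node is either a λ-abstraction
(one child) or a finite sum of elimination alternatives, recorded as the
list of pairs (head variable, arity); a child is addressed by an
alternative index together with an argument position. -/
def BFP : PFunctor.{0} :=
  ⟨Sum (ℕ × Ty) (List (ℕ × ℕ)), fun a =>
    match a with
    | .inl _ => PUnit
    | .inr l => Σ i : Fin l.length, Fin (l.get i).2⟩

/-- Böhm forests, the terms of system λ̄^co_Σ. -/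
abbrev BForest : Type := BFP.M

def BForest.lam (x : ℕ) (A : Ty) (N : BForest) : BForest :=
  PFunctor.M.mk ⟨.inl (x, A), fun _ => N⟩

/-- The empty sum `O`. -/
def BForest.obot : BForest :=
  PFunctor.M.mk ⟨.inr [], fun c => absurd c.1.isLt (by simp)⟩

/-- Sum of elimination alternatives `Σᵢ xᵢ⟨Nᵢ₁,…⟩`. -/
def BForest.alts (Es : List (ℕ × List BForest)) : BForest :=
  PFunctor.M.mk ⟨.inr (Es.map fun e => (e.1, e.2.length)), fun c =>
    (((Es[c.1.val]?).bind fun e => e.2[c.2.val]?).getD BForest.obot)⟩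

/-- A single elimination alternative `x⟨N₁,…,Nₖ⟩` as a forest. -/
def BForest.elim (x : ℕ) (Ns : List BForest) : BForest := BForest.alts [(x, Ns)]

/-- A variable fresh for the domain of `Γ`. -/
def freshVar (Γ : Ctx) : ℕ := (Γ.map Prod.fst).foldr max 0 + 1

/-- The solution space `S(Γ ⊢ A)`, defined by corecursion:
`S(Γ ⊢ A⊃B) = λx^A. S(Γ,x:A ⊢ B)` (with `x` fresh) and
`S(Γ ⊢ p) = Σ_{(y:B⃗⊃p)∈Γ} y⟨S(Γ ⊢ Bⱼ)⟩ⱼ`. -/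
def solSpace : Ctx × Ty → BForest :=
  PFunctor.M.corec fun s =>
    match s with
    | (Γ, .imp A B) => ⟨.inl (freshVar Γ, A), fun _ => ((freshVar Γ, A) :: Γ, B)⟩
    | (Γ, .at p) =>
      let ds := Γ.filter fun d => d.2.tgt = p
      ⟨.inr (ds.map fun d => (d.1, d.2.args.length)), fun c =>
        match ds[c.1.val]? with
        | some d => (Γ, (d.2.args[c.2.val]?).getD (.at p))
        | none => (Γ, .at p)⟩

/-- One step of the coinductive typing of Böhm forests (system λ̄^co_Σ):
rules `RIntro`, `LVecIntro` and `Alts`, read backwards. -/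
def TFStep (R : Ctx → BForest → Ty → Prop) (Γ : Ctx) (N : BForest) (A : Ty) : Prop :=
  match N.dest with
  | ⟨.inl (x, B), f⟩ => ∃ C, A = .imp B C ∧ R ((x, B) :: Γ) (f PUnit.unit) C
  | ⟨.inr l, f⟩ => ∃ p, A = .at p ∧
      ∀ i : Fin l.length, ∃ Bs : List Ty,
        Bs.length = (l.get i).2 ∧ ((l.get i).1, Ty.mkImp Bs p) ∈ Γ ∧
        ∀ (j : Fin (l.get i).2) (B : Ty), Bs[j.val]? = some B → R Γ (f ⟨i, j⟩) B

/-- Coinductive typing of Böhm forests (system λ̄^co_Σ). -/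
def CoTypedF (Γ : Ctx) (N : BForest) (A : Ty) : Prop :=
  ∃ R : Ctx → BForest → Ty → Prop,
    (∀ Γ' N' A', R Γ' N' A' → TFStep R Γ' N' A') ∧ R Γ N A

/-- One step of the membership relation between Böhm trees and Böhm forests. -/
def MemStep (R : BTree → BForest → Prop) (M : BTree) (T : BForest) : Prop :=
  match M.dest, T.dest with
  | ⟨.inl xA, f⟩, ⟨.inl xA', g⟩ => xA = xA' ∧ R (f PUnit.unit) (g PUnit.unit)
  | ⟨.inr (x, k), f⟩, ⟨.inr l, g⟩ =>
      ∃ i : Fin l.length, (l.get i).1 = x ∧ (l.get i).2 = k ∧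
        ∀ (j : Fin k) (j' : Fin (l.get i).2), j.val = j'.val → R (f j) (g ⟨i, j'⟩)
  | _, _ => False

/-- Coinductive membership `mem(M, T)` of a Böhm tree in a Böhm forest. -/
def Mem (M : BTree) (T : BForest) : Prop :=
  ∃ R : BTree → BForest → Prop,
    (∀ M' T', R M' T' → MemStep R M' T') ∧ R M T

/-- One step of (plain, structural) bisimilarity of Böhm forests. -/
def BisimStep (R : BForest → BForest → Prop) (T U : BForest) : Prop :=
  match T.dest, U.dest with
  | ⟨.inl xA, f⟩, ⟨.inl xA', g⟩ => xA = xA' ∧ R (f PUnit.unit) (g PUnit.unit)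
  | ⟨.inr l, f⟩, ⟨.inr l', g⟩ => l = l' ∧
      ∀ (i : Fin l.length) (i' : Fin l'.length) (j : Fin (l.get i).2)
        (j' : Fin (l'.get i').2), i.val = i'.val → j.val = j'.val →
          R (f ⟨i, j⟩) (g ⟨i', j'⟩)
  | _, _ => False

/-- Bisimilarity `≅` of Böhm forests (not identifying sums up to permutation
or multiplicity). -/
def Bisim (T U : BForest) : Prop :=
  ∃ R : BForest → BForest → Prop,
    (∀ T' U', R T' U' → BisimStep R T' U') ∧ R T U

/-- One step of bisimilarity treating sums of elimination alternatives as
sets: each summand on either side is matched by a summand on the other. -/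
def SBisimStep (R : BForest → BForest → Prop) (T U : BForest) : Prop :=
  match T.dest, U.dest with
  | ⟨.inl xA, f⟩, ⟨.inl xA', g⟩ => xA = xA' ∧ R (f PUnit.unit) (g PUnit.unit)
  | ⟨.inr l, f⟩, ⟨.inr l', g⟩ =>
      (∀ i : Fin l.length, ∃ i' : Fin l'.length, l.get i = l'.get i' ∧
        ∀ (j : Fin (l.get i).2) (j' : Fin (l'.get i').2), j.val = j'.val →
          R (f ⟨i, j⟩) (g ⟨i', j'⟩)) ∧
      (∀ i' : Fin l'.length, ∃ i : Fin l.length, l.get i = l'.get i' ∧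
        ∀ (j : Fin (l.get i).2) (j' : Fin (l'.get i').2), j.val = j'.val →
          R (f ⟨i, j⟩) (g ⟨i', j'⟩))
  | _, _ => False

/-- Bisimilarity `≈` of Böhm forests treating sums as sets of alternatives
(i.e. up to associativity, commutativity and idempotence of `+`). -/
def SBisim (T U : BForest) : Prop :=
  ∃ R : BForest → BForest → Prop,
    (∀ T' U', R T' U' → SBisimStep R T' U') ∧ R T U

/-- Lookup of the type of a variable in a context. -/
def ctxLookup (Γ : Ctx) (z : ℕ) : Option Ty :=
  (Γ.find? fun d => d.1 = z).map Prod.snd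

/-- Heads replacing a head variable `z` under co-contraction `[Γ'/Γ]`:
if `(z:A) ∈ Γ`, all `w` with `(w:A) ∈ {(z:A)} ∪ (Γ'∖Γ)`; otherwise just `z`. -/
def expandHeads (Γ Γ' : Ctx) (z : ℕ) : List ℕ :=
  match ctxLookup Γ z with
  | some A => z :: ((Γ'.filter fun d => d ∉ Γ ∧ d.2 = A).map Prod.fst)
  | none => [z]

/-- Co-contraction `[Γ'/Γ]T` on Böhm forests (intended for `Γ ≤ Γ'`),
defined by corecursion. -/
def cocontract (Γ Γ' : Ctx) : BForest → BForest :=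
  PFunctor.M.corec fun T =>
    match T.dest with
    | ⟨.inl xA, f⟩ => ⟨.inl xA, fun _ => f PUnit.unit⟩
    | ⟨.inr l, f⟩ =>
      let entries : List (ℕ × ℕ × Fin l.length) :=
        (List.finRange l.length).flatMap fun i =>
          (expandHeads Γ Γ' (l.get i).1).map fun w => (w, (l.get i).2, i)
      ⟨.inr (entries.map fun e => (e.1, e.2.1)), fun c =>
        match entries[c.1.val]? with
        | some e =>
            if h : c.2.val < (l.get e.2.2).2 then f ⟨e.2.2, ⟨c.2.val, h⟩⟩ else T
        | none => T⟩

/-- Simultaneous renaming on Böhm trees: replaces every free occurrence of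
a variable from `ys` by `x`, respecting shadowing by λ-binders; for
`ys = [x₁,…,xₙ]` and `x = x₁` this is the substitution `[x₁/x₁,…,xₙ]`. -/
def renameT (x : ℕ) (ys : List ℕ) (M : BTree) : BTree :=
  PFunctor.M.corec
    (fun s : BTree × List ℕ =>
      match s.1.dest with
      | ⟨.inl (z, A), f⟩ => ⟨.inl (z, A), fun _ => (f PUnit.unit, s.2.filter (· ≠ z))⟩
      | ⟨.inr (z, k), f⟩ =>
          ⟨.inr (if z ∈ s.2 then x else z, k), fun j => (f j, s.2)⟩)
    (M, ys)

/-- One step of "variable `x` does not occur free in the forest `T`". -/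
def NotFreeStep (R : ℕ → BForest → Prop) (x : ℕ) (T : BForest) : Prop :=
  match T.dest with
  | ⟨.inl (z, _), f⟩ => z = x ∨ R x (f PUnit.unit)
  | ⟨.inr l, f⟩ => (∀ e ∈ l, e.1 ≠ x) ∧ ∀ c, R x (f c)

/-- `x ∉ FV(T)` for a Böhm forest, coinductively. -/
def NotFree (x : ℕ) (T : BForest) : Prop :=
  ∃ R : ℕ → BForest → Prop,
    (∀ x' T', R x' T' → NotFreeStep R x' T') ∧ R x T

/-- The special case `[x₁+⋯+xₙ/x₁]T` of co-contraction, where `xs` lists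
`x₁,…,xₙ`: every application headed by `x₁` is replaced by the sum of the
applications headed by each `xᵢ`. -/
def cocontractVars (x₁ : ℕ) (xs : List ℕ) : BForest → BForest :=
  PFunctor.M.corec fun T =>
    match T.dest with
    | ⟨.inl xA, f⟩ => ⟨.inl xA, fun _ => f PUnit.unit⟩
    | ⟨.inr l, f⟩ =>
      let entries : List (ℕ × ℕ × Fin l.length) :=
        (List.finRange l.length).flatMap fun i =>
          (if (l.get i).1 = x₁ then xs else [(l.get i).1]).map fun w =>
            (w, (l.get i).2, i)
      ⟨.inr (entries.map fun e => (e.1, e.2.1)), fun c =>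
        match entries[c.1.val]? with
        | some e =>
            if h : c.2.val < (l.get e.2.2).2 then f ⟨e.2.2, ⟨c.2.val, h⟩⟩ else T
        | none => T⟩

/-- One step of "maximally co-contracted w.r.t. the (local) context `Θ`":
every head variable of a summand is declared in `Θ`, and for every variable
`y` with the same type in `Θ` the sum also contains a summand headed by `y`
with bisimilar arguments; under a λ, the context is locally extended. -/
def MCCStep (R : Ctx → BForest → Prop) (Θ : Ctx) (T : BForest) : Prop :=
  match T.dest with
  | ⟨.inl (x, A), f⟩ => R ((x, A) :: Θ) (f PUnit.unit)
  | ⟨.inr l, f⟩ =>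
      (∀ i : Fin l.length,
        (∃ A, ((l.get i).1, A) ∈ Θ) ∧
        ∀ (y : ℕ) (A : Ty), ((l.get i).1, A) ∈ Θ → (y, A) ∈ Θ →
          ∃ i' : Fin l.length, (l.get i').1 = y ∧ (l.get i').2 = (l.get i).2 ∧
            ∀ (j : Fin (l.get i).2) (j' : Fin (l.get i').2), j.val = j'.val →
              Bisim (f ⟨i, j⟩) (f ⟨i', j'⟩)) ∧
      ∀ c, R Θ (f c)

/-- `T` is maximally co-contracted w.r.t. `Θ`, coinductively. -/
def MaxCoContracted (Θ : Ctx) (T : BForest) : Prop :=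
  ∃ R : Ctx → BForest → Prop,
    (∀ Θ' T', R Θ' T' → MCCStep R Θ' T') ∧ R Θ T

/-! ### The finitary system λ̄^gfp_Σ -/

/-- Atomic sequents `Γ ⊢ p`. -/
structure ASeq : Type where
  ctx : Ctx
  tgt : ℕ

/-- `σ ≤ σ'` on atomic sequents: `Γ ≤ Γ'` and equal target atoms. -/
def ASeqLe (σ σ' : ASeq) : Prop :=
  σ.ctx ⊆ σ'.ctx ∧ tyset σ.ctx = tyset σ'.ctx ∧ σ.tgt = σ'.tgt

/-- Finitary terms of λ̄^gfp_Σ: `N ::= λx^A.N | gfp X^σ.ΣᵢEᵢ | X^σ` with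
`E ::= x⟨N₁,…,Nₖ⟩`; fixed-point variables are names (naturals) annotated
with atomic sequents. -/
inductive FTm : Type
  | lam : ℕ → Ty → FTm → FTm
  | fpvar : ℕ → ASeq → FTm
  | gfp : ℕ → ASeq → List (ℕ × List FTm) → FTm

/-- `λz₁^{A₁}…zₙ^{Aₙ}.t` for a list of declarations. -/
def lams : Ctx → FTm → FTm
  | [], t => t
  | (x, A) :: r, t => .lam x A (lams r t)

/-- Fresh variables `z₁,…,zₙ` declared with the premises `As`, extending `Γ`. -/
def extArgs (Γ : Ctx) (As : List Ty) : Ctx :=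
  (List.range As.length).zipWith (fun i A => (freshVar Γ + i, A)) As

/-- A fresh fixed-point variable name w.r.t. `Ξ`. -/
def freshFP (Ξ : List (ℕ × ASeq)) : ℕ := (Ξ.map Prod.fst).foldr max 0 + 1

/-- The side condition of the first clause of the definition of `F`:
for `C = A⃗ ⊃ p` and a declaration `X : (Θ ⊢ q)` of `Ξ`:
`p = q`, `Θ ⊆ Γ` and `|Θ| = |Γ| ∪ {A₁,…,Aₙ}`. -/
def HitCond (Γ : Ctx) (As : List Ty) (p : ℕ) (e : ℕ × ASeq) : Prop :=
  e.2.tgt = p ∧ e.2.ctx ⊆ Γ ∧ tyset e.2.ctx = tyset Γ ∪ As.toFinset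

/-- The recursion computing the finitary representation `F(Γ ⊢ C)(Ξ)`,
presented as an inductive graph relation: `FDef Γ C Ξ t` holds iff the
recursive computation of `F(Γ ⊢ C)(Ξ)` terminates with result `t`. -/
inductive FDef : Ctx → Ty → List (ℕ × ASeq) → FTm → Prop
  | hit (Γ : Ctx) (C : Ty) (Ξ : List (ℕ × ASeq)) (i : ℕ) (e : ℕ × ASeq) :
      Ξ[i]? = some e → HitCond Γ C.args C.tgt e →
      (∀ i' e', i < i' → Ξ[i']? = some e' → ¬ HitCond Γ C.args C.tgt e') →
      FDef Γ C Ξ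
        (lams (extArgs Γ C.args)
          (.fpvar e.1 ⟨Γ ++ extArgs Γ C.args, C.tgt⟩))
  | miss (Γ : Ctx) (C : Ty) (Ξ : List (ℕ × ASeq)) (alts : List (ℕ × List FTm)) :
      (∀ e ∈ Ξ, ¬ HitCond Γ C.args C.tgt e) →
      alts.length =
        ((Γ ++ extArgs Γ C.args).filter fun d => d.2.tgt = C.tgt).length →
      (∀ (i : ℕ) (d : ℕ × Ty) (a : ℕ × List FTm),
        ((Γ ++ extArgs Γ C.args).filter fun d => d.2.tgt = C.tgt)[i]? = some d →
        alts[i]? = some a → a.1 = d.1) →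
      (∀ (i : ℕ) (d : ℕ × Ty) (a : ℕ × List FTm),
        ((Γ ++ extArgs Γ C.args).filter fun d => d.2.tgt = C.tgt)[i]? = some d →
        alts[i]? = some a → a.2.length = d.2.args.length) →
      (∀ (i : ℕ) (d : ℕ × Ty) (a : ℕ × List FTm) (j : ℕ) (B : Ty) (t : FTm),
        ((Γ ++ extArgs Γ C.args).filter fun d => d.2.tgt = C.tgt)[i]? = some d →
        alts[i]? = some a → d.2.args[j]? = some B → a.2[j]? = some t →
        FDef (Γ ++ extArgs Γ C.args) B
          (Ξ ++ [(freshFP Ξ, ⟨Γ ++ extArgs Γ C.args, C.tgt⟩)]) t) →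
      FDef Γ C Ξ
        (lams (extArgs Γ C.args)
          (.gfp (freshFP Ξ) ⟨Γ ++ extArgs Γ C.args, C.tgt⟩ alts))

/-- Subformulas of a formula. -/
def Ty.subs : Ty → Finset Ty
  | .at p => {.at p}
  | .imp A B => insert (.imp A B) (A.subs ∪ B.subs)

/-- A finite set of formulas is subformula-closed. -/
def SubClosed (𝒜 : Finset Ty) : Prop := ∀ A ∈ 𝒜, A.subs ⊆ 𝒜

/-- The `𝒜`-invariant for a sequent `Γ ⊢ C` and a vector `Ξ` of fixed-point
declarations `Xᵢ : (Θᵢ ⊢ qᵢ)`: (i) `|Γ| ∪ {C} ⊆ 𝒜`; (ii) `Θ₁ ⊆ … ⊆ Θₘ = Γ`;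
(iii) each `qⱼ` is a subformula of a formula of `|Γ|`; (iv) the strippings
of the sequents of `Ξ` are pairwise distinct. -/
def AInvariant (𝒜 : Finset Ty) (Γ : Ctx) (C : Ty) (Ξ : List (ℕ × ASeq)) : Prop :=
  (tyset Γ ∪ {C} ⊆ 𝒜) ∧
  (∀ (i : ℕ) (e e' : ℕ × ASeq), Ξ[i]? = some e → Ξ[i+1]? = some e' →
      e.2.ctx ⊆ e'.2.ctx) ∧
  (∀ e : ℕ × ASeq, Ξ.getLast? = some e → e.2.ctx = Γ) ∧
  (∀ e ∈ Ξ, ∃ A ∈ tyset Γ, (Ty.at e.2.tgt) ∈ A.subs) ∧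
  (Ξ.map fun e => ((tyset e.2.ctx, e.2.tgt) : Finset Ty × ℕ)).Nodup

/-- `t` has no free occurrence of a fixed-point variable outside the list
`b` of bound names (recall that `gfp X^σ` binds all `X^{σ'}`). -/
inductive FPClosed : List ℕ → FTm → Prop
  | lam {b x A t} : FPClosed b t → FPClosed b (.lam x A t)
  | fpvar {b X σ} : X ∈ b → FPClosed b (.fpvar X σ)
  | gfp {b X σ alts} : (∀ a ∈ alts, ∀ t ∈ a.2, FPClosed (X :: b) t) →
      FPClosed b (.gfp X σ alts)

/-- Environments for the interpretation: finite assignments of Böhm forests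
to fixed-point variables typed by atomic sequents. -/
abbrev Env : Type := List (ℕ × ASeq × BForest)

def envLookup (ξ : Env) (X : ℕ) : Option (ASeq × BForest) :=
  (ξ.find? fun e => e.1 = X).map Prod.snd

/-- The label of a sum node for a list of alternatives. -/
def altsLabel (alts : List (ℕ × List FTm)) : List (ℕ × ℕ) :=
  alts.map fun e => (e.1, e.2.length)

/-- One step of the interpretation relation `⟦t⟧_ξ = N` of finitary terms as
Böhm forests: `⟦λx^A.t⟧` commutes with λ; `⟦X^{σ'}⟧_ξ = [σ'/σ]ξ(X^σ)`
(co-contraction) for the unique binding of `X` in `ξ`; and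
`⟦gfp X^σ.ΣᵢEᵢ⟧_ξ` is the forest `N` with `N = Σᵢ⟦Eᵢ⟧_{ξ∪[X^σ↦N]}`. -/
def InterpStep (R : FTm → Env → BForest → Prop) :
    FTm → Env → BForest → Prop
  | .lam x A t, ξ, N =>
      ∃ g, N.dest = ⟨.inl (x, A), g⟩ ∧ R t ξ (g PUnit.unit)
  | .fpvar X σ', ξ, N =>
      ∃ (σ : ASeq) (M : BForest), envLookup ξ X = some (σ, M) ∧ ASeqLe σ σ' ∧
        N = cocontract σ.ctx σ'.ctx M
  | .gfp X σ alts, ξ, N =>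
      ∃ g, N.dest = ⟨.inr (altsLabel alts), g⟩ ∧
        ∀ (c : Σ i : Fin (altsLabel alts).length, Fin ((altsLabel alts).get i).2)
          (a : ℕ × List FTm) (t : FTm),
            alts[c.1.val]? = some a → a.2[c.2.val]? = some t →
              R t (ξ ++ [(X, σ, N)]) (g c)

/-- The interpretation relation `⟦t⟧_ξ = N`, coinductively
(as the greatest fixed point of `InterpStep`). -/
def Interp (t : FTm) (ξ : Env) (N : BForest) : Prop :=
  ∃ R : FTm → Env → BForest → Prop,
    (∀ t' ξ' N', R t' ξ' N' → InterpStep R t' ξ' N') ∧ R t ξ N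

end LambdaBar

open LambdaBar

/-!
The cycle `f : p ⊃ p ⊢ N : p` with `N = f⟨N⟩` is closed under the typing rules read backwards,
so it is a coinductive derivation. Finitely, a proof of `p` from `f : p ⊃ p` can only end with
`f` applied to a smaller proof of `p`, so by induction there is none.
-/

namespace LambdaBar

def BTree.iterInf (x : ℕ) : BTree :=
  PFunctor.M.corec (fun _ : Unit => ⟨.inr (x, 1), fun _ => ()⟩) ()

theorem BTree.dest_iterInf (x : ℕ) :
    (BTree.iterInf x).dest = ⟨.inr (x, 1), fun _ => BTree.iterInf x⟩ :=
  PFunctor.M.dest_corec _ _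

theorem BTree.iterInf_eq_app (x : ℕ) : BTree.iterInf x = BTree.app x [BTree.iterInf x] := by
  conv_lhs => rw [← PFunctor.M.mk_dest (BTree.iterInf x), BTree.dest_iterInf]
  refine congrArg PFunctor.M.mk (congrArg (Sigma.mk _) (funext fun i => ?_))
  rw [Subsingleton.elim (α := Fin 1) i 0]
  rfl

theorem BTree.dest_lam (x : ℕ) (A : Ty) (N : BTree) :
    (BTree.lam x A N).dest = ⟨.inl (x, A), fun _ => N⟩ :=
  PFunctor.M.dest_mk _

theorem TTStep.mono {R S : Ctx → BTree → Ty → Prop} (hRS : ∀ Γ N A, R Γ N A → S Γ N A)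
    {Γ : Ctx} {N : BTree} {A : Ty} (h : TTStep R Γ N A) : TTStep S Γ N A := by
  unfold TTStep at *
  split at h
  · obtain ⟨C, hA, hR⟩ := h
    exact ⟨C, hA, hRS _ _ _ hR⟩
  · obtain ⟨p, Bs, hA, hx, hk, hR⟩ := h
    exact ⟨p, Bs, hA, hx, hk, fun i B hB => hRS _ _ _ (hR i B hB)⟩

theorem CoTypedT.unfold {Γ : Ctx} {N : BTree} {A : Ty} (h : CoTypedT Γ N A) :
    TTStep CoTypedT Γ N A := by
  obtain ⟨R, hR, hN⟩ := h
  exact (hR _ _ _ hN).mono fun Γ' N' A' h' => ⟨R, hR, h'⟩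

theorem CoTypedT.of_step {Γ : Ctx} {N : BTree} {A : Ty} (h : TTStep CoTypedT Γ N A) :
    CoTypedT Γ N A :=
  ⟨fun Γ' N' A' => CoTypedT Γ' N' A' ∨ (Γ' = Γ ∧ N' = N ∧ A' = A),
    by
      rintro Γ' N' A' (h' | ⟨rfl, rfl, rfl⟩)
      · exact h'.unfold.mono fun _ _ _ => Or.inl
      · exact h.mono fun _ _ _ => Or.inl,
    Or.inr ⟨rfl, rfl, rfl⟩⟩

theorem CoTypedT.lam {Γ : Ctx} {x : ℕ} {A B : Ty} {N : BTree} (h : CoTypedT ((x, A) :: Γ) N B) :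
    CoTypedT Γ (BTree.lam x A N) (.imp A B) :=
  .of_step <| by
    unfold TTStep
    rw [BTree.dest_lam]
    exact ⟨B, rfl, h⟩

theorem coTypedT_iterInf {Γ : Ctx} {x p : ℕ} (hx : (x, .imp (.at p) (.at p)) ∈ Γ) :
    CoTypedT Γ (BTree.iterInf x) (.at p) := by
  refine ⟨fun Γ' N' A' => Γ' = Γ ∧ N' = BTree.iterInf x ∧ A' = .at p, ?_, rfl, rfl, rfl⟩
  rintro _ _ _ ⟨rfl, rfl, rfl⟩
  unfold TTStep
  rw [BTree.dest_iterInf]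
  refine ⟨p, [.at p], rfl, hx, rfl, fun i B hB => ⟨rfl, rfl, ?_⟩⟩
  rw [Subsingleton.elim (α := Fin 1) i 0] at hB
  exact (Option.some.inj hB).symm

theorem Ty.mkImp_eq_imp_at_at {Bs : List Ty} {q p : ℕ}
    (h : Ty.mkImp Bs q = .imp (.at p) (.at p)) : Bs = [.at p] ∧ q = p := by
  rcases Bs with _ | ⟨B, _ | ⟨B', Bs⟩⟩
  · cases h
  · simp only [Ty.mkImp, Ty.imp.injEq, Ty.at.injEq] at h
    exact ⟨by rw [h.1], h.2⟩
  · cases Bs <;> simp [Ty.mkImp] at h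

theorem not_typedTm_at_of_forall_imp_self {Γ : Ctx} {p : ℕ}
    (hΓ : ∀ d ∈ Γ, d.2 = .imp (.at p) (.at p)) (t : Tm) : ¬ TypedTm Γ t (.at p) := by
  generalize hA : Ty.at p = A
  intro ht
  induction ht with
  | rIntro => cases hA
  | lVecIntro hx hlen _ ih =>
    cases hA
    obtain ⟨rfl, -⟩ := Ty.mkImp_eq_imp_at_at (hΓ _ hx)
    obtain ⟨t, rfl⟩ := List.length_eq_one_iff.mp hlen
    exact ih 0 t _ rfl rfl hΓ rfl

theorem not_typedTm_infty (p : ℕ) (t : Tm) :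
    ¬ TypedTm [] t (.imp (.imp (.at p) (.at p)) (.at p)) := by
  rintro ⟨h⟩
  exact not_typedTm_at_of_forall_imp_self (by simp) _ h

end LambdaBar

/-- Example 2: there is a Böhm tree `it^∞ = λf^{p⊃p}.N`
with `N = f⟨N⟩` such that `⊢ it^∞ : (p⊃p)⊃p` holds coinductively, although
the type `INFTY = (p⊃p)⊃p` has no finite inhabitant. -/
theorem infty_has_infinite_solution_but_no_finite_inhabitant :
    ∃ N : BTree, N = BTree.app 0 [N] ∧
      CoTypedT [] (BTree.lam 0 (Ty.imp (.at 0) (.at 0)) N)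
        (Ty.imp (Ty.imp (.at 0) (.at 0)) (.at 0)) ∧
      ∀ t : Tm, ¬ TypedTm [] t (Ty.imp (Ty.imp (.at 0) (.at 0)) (.at 0)) :=
  ⟨BTree.iterInf 0, BTree.iterInf_eq_app 0,
    .lam (coTypedT_iterInf (List.mem_singleton_self _)), not_typedTm_infty 0⟩
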